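/- Binomial balance lower bound: for all integers 1 ≤ k' < k, letting l = min{k', k − k'} and α = (k − k')/k, we have C(k, k') · α^{k−k'} · (1−α)^{k'} ≥ 1/2^{2l}. -/

import Mathlib

/-!
Write `k = a + b` with `a ≤ b`. Comparing the products `k^a * a!` and `a^a * k!/(k-a)!` factor by
factor gives `C(k, a) (a/k)^a ≥ 1`, so it remains to bound `(b/k)^b ≥ (b/k)^k = (1 - a/k)^k`.
Bernoulli's inequality for the exponent `2a/k ≤ 1` gives `(1/2)^(2a/k) ≤ 1 - a/k`, and raising this
to the `k`-th power yields `(1 - a/k)^k ≥ 2^(-2a)`.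
-/

open Finset

theorem Nat.pow_le_pow_mul_choose {k l : ℕ} (h : l ≤ k) : k ^ l ≤ l ^ l * k.choose l := by
  have key : k ^ l * l.factorial ≤ l ^ l * k.descFactorial l :=
    calc k ^ l * l.factorial = ∏ i ∈ range l, k * (l - i) := by
          rw [prod_mul_distrib, prod_const, card_range, ← Nat.descFactorial_eq_prod_range,
            Nat.descFactorial_self]
      _ ≤ ∏ i ∈ range l, l * (k - i) := by
          refine prod_le_prod' fun i _ => ?_
          have : l * i ≤ k * i := Nat.mul_le_mul_right i h
          rw [Nat.mul_sub, Nat.mul_sub, Nat.mul_comm l k]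
          omega
      _ = l ^ l * k.descFactorial l := by
          rw [prod_mul_distrib, prod_const, card_range, ← Nat.descFactorial_eq_prod_range]
  rw [Nat.descFactorial_eq_factorial_mul_choose, ← Nat.mul_assoc, Nat.mul_right_comm] at key
  exact Nat.le_of_mul_le_mul_right key l.factorial_pos

theorem one_le_choose_mul_div_pow {k l : ℕ} (h : l ≤ k) :
    1 ≤ (k.choose l : ℝ) * ((l : ℝ) / k) ^ l := by
  rcases Nat.eq_zero_or_pos l with rfl | hl
  · simp
  have hk : (0 : ℝ) < k := by exact_mod_cast hl.trans_le h
  rw [div_pow, mul_div_assoc', le_div_iff₀ (by positivity), one_mul, mul_comm]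
  exact_mod_cast Nat.pow_le_pow_mul_choose h

theorem one_div_two_pow_le_div_pow {a b : ℕ} (hab : a ≤ b) :
    1 / 2 ^ (2 * a) ≤ ((b : ℝ) / (a + b)) ^ (a + b) := by
  rcases Nat.eq_zero_or_pos b with rfl | hb
  · obtain rfl : a = 0 := by omega
    simp
  have hn : (0 : ℝ) < a + b := by positivity
  set p : ℝ := 2 * a / (a + b)
  have hp0 : 0 ≤ p := by positivity
  have hp1 : p ≤ 1 := by
    rw [div_le_one hn]
    exact_mod_cast (by omega : 2 * a ≤ a + b)
  have bernoulli := rpow_one_add_le_one_add_mul_self (s := -1 / 2) (by norm_num) hp0 hp1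
  have hrhs : 1 + p * (-1 / 2) = b / (a + b) := by
    simp only [p]
    field_simp
    ring
  rw [hrhs] at bernoulli
  calc (1 : ℝ) / 2 ^ (2 * a) = ((1 + -1 / 2 : ℝ) ^ p) ^ (a + b) := by
        have hexp : p * ((a + b : ℕ) : ℝ) = ((2 * a : ℕ) : ℝ) := by
          simp only [p]
          push_cast
          exact div_mul_cancel₀ _ hn.ne'
        rw [← Real.rpow_natCast _ (a + b), ← Real.rpow_mul (by norm_num), hexp, Real.rpow_natCast]
        norm_num [div_pow]
    _ ≤ ((b : ℝ) / (a + b)) ^ (a + b) :=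
        pow_le_pow_left₀ (Real.rpow_nonneg (by norm_num) p) bernoulli _

theorem one_div_two_pow_min_le_choose_mul (a b : ℕ) :
    1 / 2 ^ (2 * min a b)
      ≤ ((a + b).choose a : ℝ) * ((a : ℝ) / (a + b)) ^ a * ((b : ℝ) / (a + b)) ^ b := by
  wlog hab : a ≤ b generalizing a b
  · convert this b a (by omega) using 1
    · rw [min_comm]
    · rw [Nat.add_comm b a, ← Nat.choose_symm_add, add_comm (b : ℝ)]
      ring
  have hb : (0 : ℝ) ≤ b / (a + b) := by positivity
  have hb1 : (b : ℝ) / (a + b) ≤ 1 := div_le_one_of_le₀ (by simp) (by positivity)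
  have hchoose := one_le_choose_mul_div_pow (Nat.le_add_right a b)
  push_cast at hchoose
  rw [min_eq_left hab]
  calc (1 : ℝ) / 2 ^ (2 * a) ≤ ((b : ℝ) / (a + b)) ^ (a + b) := one_div_two_pow_le_div_pow hab
    _ ≤ ((b : ℝ) / (a + b)) ^ b := pow_le_pow_of_le_one hb hb1 (Nat.le_add_left b a)
    _ ≤ _ := le_mul_of_one_le_left (pow_nonneg hb b) hchoose

theorem stmt_17_general (k k' : ℕ) (h2 : k' < k) :
    (Nat.choose k k' : ℝ) * (((k - k' : ℕ) : ℝ) / (k : ℝ)) ^ (k - k')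
        * (1 - ((k - k' : ℕ) : ℝ) / (k : ℝ)) ^ k'
      ≥ 1 / 2 ^ (2 * min k' (k - k')) := by
  obtain ⟨b, rfl⟩ := Nat.exists_eq_add_of_le h2.le
  have hk : (k' : ℝ) + b ≠ 0 := by
    have : 0 < b := by omega
    positivity
  have hflip : 1 - (b : ℝ) / (k' + b) = k' / (k' + b) := by
    field_simp
    ring
  rw [Nat.add_sub_cancel_left, ge_iff_le]
  push_cast
  rw [hflip]
  convert one_div_two_pow_min_le_choose_mul k' b using 1
  ring

/-- Binomial balance lower bound: for `1 ≤ k' < k`, with `l = min(k', k−k')`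
and `α = (k−k')/k`, one has `C(k,k') α^{k−k'} (1−α)^{k'} ≥ 1/2^{2l}`. -/
theorem stmt_17 (k k' : ℕ) (h1 : 1 ≤ k') (h2 : k' < k) :
    (Nat.choose k k' : ℝ) * (((k - k' : ℕ) : ℝ) / (k : ℝ)) ^ (k - k')
        * (1 - ((k - k' : ℕ) : ℝ) / (k : ℝ)) ^ k'
      ≥ 1 / 2 ^ (2 * min k' (k - k')) :=
  stmt_17_general k k' h2
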